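/- arXiv:2501.18202 — 3 statements merged into one kernel-verified Lean document; each statement's English description precedes it below -/
import Mathlib

section
/- Let X₁,…,X_m be independent random variables with values in finite sets V₁,…,V_m, S a function into a finite output set, F = S∘(X₁,…,X_m), and O_S a valid oracle for S. Then DPNL(o, v, O_S) — which returns 1 if O_S(v,o)=1, returns 0 if O_S(v,o)=0, and otherwise picks k with v[k]=⊥ and returns Σ_{y∈V_k} P(X_k = y)·DPNL(o, v_{v[k]←y}, O_S) — terminates for every valuation v with P(w(v)) > 0 and returns the conditional probability P(F = o | w(v)), where w(v) is the event that (X₁,…,X_m) ∈ tot(v). -/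
open MeasureTheory ProbabilityTheory Finset
open scoped ENNReal


open MeasureTheory ProbabilityTheory Finset
open scoped ENNReal

section DPNLaux

variable {Ω : Type*} [MeasurableSpace Ω] (P : Measure Ω) [IsProbabilityMeasure P]
  {m : ℕ} {V : Fin m → Type*} [∀ k, Fintype (V k)] [∀ k, DecidableEq (V k)]
  (X : ∀ k, Ω → V k)

noncomputable def DPH (v : ∀ k, Option (V k)) : ℝ≥0∞ :=
  ∏ k, (v k).elim 1 (fun y => P {ω | X k ω = y})

def DPE (v : ∀ k, Option (V k)) : Finset (∀ k, V k) :=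
  Fintype.piFinset (fun k => (v k).elim Finset.univ (fun y => {y}))

lemma mem_DPE {v : ∀ k, Option (V k)} {x : ∀ k, V k} :
    x ∈ DPE v ↔ ∀ k y, v k = some y → x k = y := by
  rw [DPE, Fintype.mem_piFinset]
  constructor
  · intro h k y hk
    have := h k
    rw [hk] at this
    simpa using this
  · intro h k
    cases hk : v k with
    | none => simp
    | some y => simpa using h k y hk

lemma DPE_update {v : ∀ k, Option (V k)} {k : Fin m} (hk : v k = none) (y : V k) :
    DPE (Function.update v k (some y)) = (DPE v).filter (fun x => x k = y) := by
  ext x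
  simp only [mem_DPE, Finset.mem_filter]
  constructor
  · intro h
    have hx : x k = y := h k y (by simp)
    refine ⟨fun j z hj => ?_, hx⟩
    rcases eq_or_ne j k with rfl | hjk
    · rw [hk] at hj; cases hj
    · exact h j z (by rwa [Function.update_of_ne hjk])
  · rintro ⟨h, hx⟩ j z hj
    rcases eq_or_ne j k with rfl | hjk
    · rw [Function.update_self] at hj
      exact (Option.some.inj hj) ▸ hx
    · rw [Function.update_of_ne hjk] at hj
      exact h j z hj

lemma DP_sum_one (hmeas : ∀ k (x : V k), MeasurableSet {ω | X k ω = x}) (k : Fin m) :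
    ∑ y : V k, P {ω | X k ω = y} = 1 := by
  rw [← measure_biUnion_finset ?_ (fun y _ => hmeas k y)]
  · have h : ⋃ y ∈ (Finset.univ : Finset (V k)), {ω | X k ω = y} = Set.univ := by
      ext ω; simp
    rw [h, measure_univ]
  · intro y _ z _ hyz
    simp only [Function.onFun]
    apply Set.disjoint_left.mpr
    intro ω h1 h2
    exact hyz (h1.symm.trans h2)

lemma DPA_measurable (hmeas : ∀ k (x : V k), MeasurableSet {ω | X k ω = x}) (x : ∀ k, V k) :
    MeasurableSet {ω | ∀ k, X k ω = x k} := by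
  have h : {ω | ∀ k, X k ω = x k} = ⋂ k, {ω | X k ω = x k} := by ext ω; simp
  rw [h]; exact MeasurableSet.iInter (fun k => hmeas k (x k))

lemma DPw_eq (v : ∀ k, Option (V k)) :
    {ω | ∀ k y, v k = some y → X k ω = y} = ⋃ x ∈ DPE v, {ω | ∀ k, X k ω = x k} := by
  ext ω
  simp only [Set.mem_setOf_eq, Set.mem_iUnion]
  constructor
  · intro h
    exact ⟨fun k => X k ω, mem_DPE.mpr h, fun k => rfl⟩
  · rintro ⟨x, hx, hω⟩ k y hk
    rw [hω k]
    exact mem_DPE.mp hx k y hk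

lemma DP_measure_biUnion (hmeas : ∀ k (x : V k), MeasurableSet {ω | X k ω = x})
    (hind : ∀ x : ∀ k, V k, P (⋂ k, {ω | X k ω = x k}) = ∏ k, P {ω | X k ω = x k})
    (s : Finset (∀ k, V k)) :
    P (⋃ x ∈ s, {ω | ∀ k, X k ω = x k}) = ∑ x ∈ s, ∏ k, P {ω | X k ω = x k} := by
  rw [measure_biUnion_finset ?_ (fun x _ => DPA_measurable X hmeas x)]
  · refine Finset.sum_congr rfl fun x _ => ?_
    have h : {ω | ∀ k, X k ω = x k} = ⋂ k, {ω | X k ω = x k} := by ext ω; simp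
    rw [h, hind]
  · intro x _ x' _ hne
    simp only [Function.onFun]
    apply Set.disjoint_left.mpr
    intro ω h1 h2
    exact hne (funext fun k => (h1 k).symm.trans (h2 k))

lemma DPH_eq_sum (hmeas : ∀ k (x : V k), MeasurableSet {ω | X k ω = x})
    (v : ∀ k, Option (V k)) :
    DPH P X v = ∑ x ∈ DPE v, ∏ k, P {ω | X k ω = x k} := by
  rw [DPE]
  calc DPH P X v
      = ∏ k, ∑ y ∈ (v k).elim Finset.univ (fun y => ({y} : Finset (V k))),
          P {ω | X k ω = y} := by
        rw [DPH]
        refine Finset.prod_congr rfl fun k _ => ?_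
        cases hk : v k with
        | none => simp [DP_sum_one P X hmeas k]
        | some y => simp
    _ = _ := Finset.prod_univ_sum _ _

lemma DPH_update {v : ∀ k, Option (V k)} {k : Fin m} (hk : v k = none) (y : V k) :
    DPH P X (Function.update v k (some y)) = P {ω | X k ω = y} * DPH P X v := by
  rw [DPH, DPH]
  have h1 : ∀ j, (Function.update v k (some y) j).elim 1 (fun z => P {ω | X j ω = z})
      = Function.update (fun j => (v j).elim 1 (fun z => P {ω | X j ω = z})) k
          (P {ω | X k ω = y}) j := by
    intro j
    rcases eq_or_ne j k with rfl | hjk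
    · simp
    · simp [Function.update_of_ne hjk]
  rw [Finset.prod_congr rfl (fun j _ => h1 j), Finset.prod_update_of_mem (Finset.mem_univ k)]
  congr 1
  rw [← Finset.mul_prod_erase Finset.univ _ (Finset.mem_univ k), hk, Finset.erase_eq]
  simp

variable {O : Type*} [DecidableEq O]

noncomputable def DPG (S : (∀ k, V k) → O) (o : O) (v : ∀ k, Option (V k)) : ℝ≥0∞ :=
  ∑ x ∈ (DPE v).filter (fun x => S x = o), ∏ k, P {ω | X k ω = x k}

lemma DPG_rec (S : (∀ k, V k) → O) (o : O) {v : ∀ k, Option (V k)} {k : Fin m}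
    (hk : v k = none) :
    DPG P X S o v = ∑ y : V k, DPG P X S o (Function.update v k (some y)) := by
  rw [DPG, ← Finset.sum_fiberwise_of_maps_to (fun x _ => Finset.mem_univ (x k))]
  refine Finset.sum_congr rfl fun y _ => ?_
  rw [DPG, DPE_update hk y, Finset.filter_comm]

lemma DP_card_update {v : ∀ k, Option (V k)} {k : Fin m} (hk : v k = none) (y : V k) :
    (Finset.univ.filter (fun j => Function.update v k (some y) j = none))
      = (Finset.univ.filter (fun j => v j = none)).erase k := by
  ext j
  simp only [Finset.mem_filter, Finset.mem_erase, Finset.mem_univ, true_and]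
  rcases eq_or_ne j k with rfl | hjk
  · simp
  · simp [Function.update_of_ne hjk, hjk]

end DPNLaux


/-- correctness of DPNL.  Any function `f` computing the DPNL recursion
with a valid oracle `Or` (return 1 when the oracle answers 1, 0 when it answers 0,
otherwise branch on some unassigned index) returns the conditional probability
`P(F = o | w(v))` on every valuation `v` with `P(w(v)) > 0`, where
`F = S ∘ (X₁,…,X_m)` and `w(v)` is the event that `(X₁,…,X_m)` extends `v`. -/
theorem stmt8 {Ω : Type*} [MeasurableSpace Ω] (P : Measure Ω) [IsProbabilityMeasure P]
    {m : ℕ} {V : Fin m → Type*} [∀ k, Fintype (V k)] [∀ k, DecidableEq (V k)]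
    {O : Type*} [DecidableEq O]
    (X : ∀ k, Ω → V k)
    (hmeas : ∀ k (x : V k), MeasurableSet {ω | X k ω = x})
    (hind : ∀ x : ∀ k, V k, P (⋂ k, {ω | X k ω = x k}) = ∏ k, P {ω | X k ω = x k})
    (S : (∀ k, V k) → O) (o : O)
    (Or : (∀ k, Option (V k)) → O → Option Bool)
    (hOr_total : ∀ (v : ∀ k, Option (V k)) (o' : O) (x : ∀ k, V k),
        (∀ k, v k = some (x k)) → Or v o' = some (decide (S x = o')))
    (hOr1 : ∀ (v : ∀ k, Option (V k)) (o' : O), Or v o' = some true →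
        ∀ x : ∀ k, V k, (∀ k y, v k = some y → x k = y) → S x = o')
    (hOr0 : ∀ (v : ∀ k, Option (V k)) (o' : O), Or v o' = some false →
        ∀ x : ∀ k, V k, (∀ k y, v k = some y → x k = y) → S x ≠ o')
    (f : (∀ k, Option (V k)) → ℝ≥0∞)
    (hf1 : ∀ v, Or v o = some true → f v = 1)
    (hf0 : ∀ v, Or v o = some false → f v = 0)
    (hfrec : ∀ v, Or v o = none → ∃ k, v k = none ∧
        f v = ∑ y : V k, P {ω | X k ω = y} * f (Function.update v k (some y))) :
    ∀ v : ∀ k, Option (V k), P {ω | ∀ k y, v k = some y → X k ω = y} ≠ 0 →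
      f v = ProbabilityTheory.cond P {ω | ∀ k y, v k = some y → X k ω = y}
              {ω | S (fun k => X k ω) = o} := by
  classical
  have caseTF : ∀ v b, Or v o = some b → f v * DPH P X v = DPG P X S o v := by
    intro v b hb
    cases b with
    | false =>
      rw [hf0 v hb, zero_mul, DPG, Finset.filter_false_of_mem, Finset.sum_empty]
      intro x hx
      exact hOr0 v o hb x (mem_DPE.mp hx)
    | true =>
      rw [hf1 v hb, one_mul, DPG, Finset.filter_true_of_mem, ← DPH_eq_sum P X hmeas]
      intro x hx
      exact hOr1 v o hb x (mem_DPE.mp hx)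
  have key : ∀ n (v : ∀ k, Option (V k)),
      (Finset.univ.filter (fun j => v j = none)).card ≤ n →
      f v * DPH P X v = DPG P X S o v := by
    intro n
    induction n with
    | zero =>
      intro v hcard
      cases hOrv : Or v o with
      | some b => exact caseTF v b hOrv
      | none =>
        obtain ⟨k, hk, -⟩ := hfrec v hOrv
        exfalso
        have hmem : k ∈ Finset.univ.filter (fun j => v j = none) := by simp [hk]
        have := Finset.card_pos.mpr ⟨k, hmem⟩
        omega
    | succ n ih =>
      intro v hcard
      cases hOrv : Or v o with
      | some b => exact caseTF v b hOrv
      | none =>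
        obtain ⟨k, hk, hrec⟩ := hfrec v hOrv
        have hupd : ∀ y : V k,
            f (Function.update v k (some y)) * DPH P X (Function.update v k (some y))
              = DPG P X S o (Function.update v k (some y)) := by
          intro y
          apply ih
          rw [DP_card_update hk y, Finset.card_erase_of_mem (by simp [hk])]
          omega
        rw [hrec, Finset.sum_mul, DPG_rec P X S o hk]
        refine Finset.sum_congr rfl fun y _ => ?_
        rw [← hupd y, DPH_update P X hk y]
        ring
  intro v hv
  have hwmeas : MeasurableSet {ω | ∀ k y, v k = some y → X k ω = y} := by
    rw [DPw_eq X v]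
    exact (DPE v).measurableSet_biUnion (fun x _ => DPA_measurable X hmeas x)
  have hPw : P {ω | ∀ k y, v k = some y → X k ω = y} = DPH P X v := by
    rw [DPw_eq X v, DP_measure_biUnion P X hmeas hind, DPH_eq_sum P X hmeas]
  have hwE : {ω | ∀ k y, v k = some y → X k ω = y} ∩ {ω | S (fun k => X k ω) = o}
      = ⋃ x ∈ (DPE v).filter (fun x => S x = o), {ω | ∀ k, X k ω = x k} := by
    ext ω
    simp only [Set.mem_inter_iff, Set.mem_setOf_eq, Set.mem_iUnion, Finset.mem_filter]
    constructor
    · rintro ⟨hw, hS⟩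
      exact ⟨fun k => X k ω, ⟨mem_DPE.mpr hw, hS⟩, fun k => rfl⟩
    · rintro ⟨x, ⟨hx, hSx⟩, hω⟩
      have hfx : (fun k => X k ω) = x := funext hω
      constructor
      · intro k y hk
        rw [hω k]
        exact mem_DPE.mp hx k y hk
      · rw [hfx]; exact hSx
  have hPinter : P ({ω | ∀ k y, v k = some y → X k ω = y} ∩ {ω | S (fun k => X k ω) = o})
      = DPG P X S o v := by
    rw [hwE, DP_measure_biUnion P X hmeas hind, DPG]
  have hkey := key _ v le_rfl
  have hH0 : DPH P X v ≠ 0 := hPw ▸ hv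
  have hHtop : DPH P X v ≠ ⊤ := hPw ▸ measure_ne_top P _
  rw [ProbabilityTheory.cond_apply hwmeas, hPw, hPinter]
  calc f v = f v * (DPH P X v * (DPH P X v)⁻¹) := by
        rw [ENNReal.mul_inv_cancel hH0 hHtop, mul_one]
    _ = f v * DPH P X v * (DPH P X v)⁻¹ := by ring
    _ = DPG P X S o v * (DPH P X v)⁻¹ := by rw [hkey]
    _ = (DPH P X v)⁻¹ * DPG P X S o v := mul_comm _ _
end

section
/- The AdditionOracle for the N-digit addition function is valid: given a valuation v of 2N digit variables (each in [0,9] or unknown) and a target r with base-10 digits r₀…r_N, if the oracle (which computes the sum digit by digit from right to left, returning ⊥ upon encountering an unknown digit, 0 upon a digit mismatch, and comparing the final carry with r₀) returns 0 then every total extension of v has a sum different from r, and if it returns 1 then v is total and its sum equals r. -/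
open Finset

/-- The sum of the two `N`-digit numbers encoded by a total valuation
`x : Fin (2*N) → Fin 10` (first summand: indices `0..N-1`, most significant first;
second summand: indices `N..2N-1`). -/
def additionResult (N : ℕ) (x : Fin (2 * N) → Fin 10) : ℕ :=
  (∑ i : Fin N, (x ⟨i.val, by have h := i.isLt; omega⟩ : ℕ) * 10 ^ (N - 1 - i.val)) +
  (∑ i : Fin N, (x ⟨N + i.val, by have h := i.isLt; omega⟩ : ℕ) * 10 ^ (N - 1 - i.val))

/-- The loop of the AdditionOracle: processes digit positions from right (position `N`)
to left (position `1`), carrying; returns `none` on an unknown digit, `some false` on a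
digit mismatch with the target `r`, and finally compares the carry with the leading
digit `r₀ = r / 10^N`. `addOracleAux N vv r i carry` processes positions `i, i-1, …, 1`. -/
def addOracleAux (N : ℕ) (vv : ℕ → Option ℕ) (r : ℕ) : ℕ → ℕ → Option Bool
  | 0, carry => some (decide (carry = r / 10 ^ N))
  | (i + 1), carry =>
    match vv i, vv (N + i) with
    | some a, some b =>
        let d := carry + a + b
        if d % 10 = (r / 10 ^ (N - (i + 1))) % 10 then addOracleAux N vv r i (d / 10)
        else some false
    | _, _ => none

/-- The AdditionOracle on a valuation of the `2N` digit variables. -/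
def addOracle (N : ℕ) (v : Fin (2 * N) → Option (Fin 10)) (r : ℕ) : Option Bool :=
  addOracleAux N
    (fun i => if h : i < 2 * N then (v ⟨i, h⟩).map (fun d => (d : ℕ)) else none) r N 0

/-! The oracle adds the columns from the least significant one up. In the state where the
leading `i` columns remain and the carry is `c`, it answers `true` exactly when `c` plus the
number formed by these column sums equals `r / 10 ^ (N - i)`; one column step is the identity
`d + 10 T = R ↔ d % 10 = R % 10 ∧ d / 10 + T = R / 10`. At `i = N`, `c = 0` this is the claim,
and a `true` answer is only reached after every digit has been read. -/

/-- `addOracle N v r` is definitionally `addOracleAux N (liftValuation v) r N 0`. -/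
def liftValuation {N : ℕ} (v : Fin (2 * N) → Option (Fin 10)) (i : ℕ) : Option ℕ :=
  if h : i < 2 * N then (v ⟨i, h⟩).map (fun d => (d : ℕ)) else none

def liftTotal {N : ℕ} (x : Fin (2 * N) → Fin 10) (i : ℕ) : ℕ :=
  if h : i < 2 * N then x ⟨i, h⟩ else 0

def columnPrefix (a : ℕ → ℕ) (N i : ℕ) : ℕ :=
  ∑ j ∈ range i, (a j + a (N + j)) * 10 ^ (i - 1 - j)

lemma columnPrefix_succ (a : ℕ → ℕ) (N i : ℕ) :
    columnPrefix a N (i + 1) = 10 * columnPrefix a N i + (a i + a (N + i)) := by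
  rw [columnPrefix, columnPrefix, sum_range_succ, Nat.add_sub_cancel, Nat.sub_self, pow_zero,
    mul_one, mul_sum]
  congr 1
  refine sum_congr rfl fun j hj => ?_
  rw [show i - j = i - 1 - j + 1 by have := mem_range.mp hj; omega, pow_succ]
  ring

lemma add_mul_eq_iff_mod_eq_and_div_add_eq {b : ℕ} (hb : 0 < b) (d T R : ℕ) :
    d + b * T = R ↔ d % b = R % b ∧ d / b + T = R / b := by
  constructor
  · rintro rfl
    exact ⟨(Nat.add_mul_mod_self_left d b T).symm, (Nat.add_mul_div_left d T hb).symm⟩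
  · rintro ⟨hmod, hdiv⟩
    rw [← Nat.mod_add_div R b, ← hmod, ← hdiv, mul_add, ← add_assoc, Nat.mod_add_div]

lemma div_pow_sub_succ_div {r b N i : ℕ} (hi : i < N) :
    r / b ^ (N - (i + 1)) / b = r / b ^ (N - i) := by
  rw [Nat.div_div_eq_div_mul, ← pow_succ, show N - (i + 1) + 1 = N - i by omega]

section Oracle

variable {N : ℕ} {vv : ℕ → Option ℕ} {r i c : ℕ} {b : Bool}

lemma exists_of_addOracleAux_succ_eq_some
    (h : addOracleAux N vv r (i + 1) c = some b) :
    ∃ p q, vv i = some p ∧ vv (N + i) = some q ∧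
      (if (c + p + q) % 10 = r / 10 ^ (N - (i + 1)) % 10 then
        addOracleAux N vv r i ((c + p + q) / 10) else some false) = some b := by
  rw [addOracleAux] at h
  split at h
  · exact ⟨_, _, ‹_›, ‹_›, h⟩
  · cases h

lemma isSome_of_addOracleAux_eq_some_true (h : addOracleAux N vv r i c = some true) :
    ∀ j < i, (vv j).isSome ∧ (vv (N + j)).isSome := by
  induction i generalizing c with
  | zero => simp
  | succ i ih =>
    obtain ⟨p, q, hp, hq, h⟩ := exists_of_addOracleAux_succ_eq_some h
    split_ifs at h
    · intro j hj
      rcases Nat.lt_succ_iff_lt_or_eq.mp hj with hj | rfl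
      · exact ih h j hj
      · simp [hp, hq]
    · cases h

lemma eq_true_iff_of_addOracleAux_eq_some {a : ℕ → ℕ}
    (ha : ∀ j d, vv j = some d → a j = d) (hi : i ≤ N)
    (h : addOracleAux N vv r i c = some b) :
    b = true ↔ c + columnPrefix a N i = r / 10 ^ (N - i) := by
  induction i generalizing c with
  | zero =>
    rw [addOracleAux, Option.some_inj] at h
    simp [← h, columnPrefix]
  | succ i ih =>
    obtain ⟨p, q, hp, hq, h⟩ := exists_of_addOracleAux_succ_eq_some h
    have hstep : c + columnPrefix a N (i + 1) = c + p + q + 10 * columnPrefix a N i := by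
      rw [columnPrefix_succ, ha _ _ hp, ha _ _ hq]
      ring
    rw [hstep, add_mul_eq_iff_mod_eq_and_div_add_eq (by norm_num),
      div_pow_sub_succ_div (by omega)]
    split_ifs at h with hdigit
    · simpa [hdigit] using ih (by omega) h
    · simp [← Option.some_inj.mp h, hdigit]

end Oracle

lemma additionResult_eq_columnPrefix (N : ℕ) (x : Fin (2 * N) → Fin 10) :
    additionResult N x = columnPrefix (liftTotal x) N N := by
  rw [additionResult, ← sum_add_distrib, columnPrefix, ← Fin.sum_univ_eq_sum_range]
  refine sum_congr rfl fun i _ => ?_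
  simp only [liftTotal, dif_pos (show (i : ℕ) < 2 * N by omega),
    dif_pos (show N + i < 2 * N by omega)]
  ring

lemma liftTotal_eq_of_liftValuation_eq_some {N : ℕ} {v : Fin (2 * N) → Option (Fin 10)}
    {x : Fin (2 * N) → Fin 10} (hx : ∀ k d, v k = some d → x k = d) :
    ∀ j d, liftValuation v j = some d → liftTotal x j = d := by
  intro j d hj
  unfold liftValuation at hj
  split_ifs at hj with hj2
  cases hv : v ⟨j, hj2⟩ <;> simp [hv] at hj
  simp [liftTotal, hj2, hx _ _ hv, hj]

lemma isSome_liftValuation {N : ℕ} (v : Fin (2 * N) → Option (Fin 10)) (k : Fin (2 * N)) :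
    (liftValuation v k).isSome = (v k).isSome := by
  cases hv : v k <;> simp [liftValuation, hv]

theorem stmt13_general (N : ℕ) (v : Fin (2 * N) → Option (Fin 10)) (r : ℕ) :
    (addOracle N v r = some false →
      ∀ x : Fin (2 * N) → Fin 10, (∀ k d, v k = some d → x k = d) →
        additionResult N x ≠ r) ∧
    (addOracle N v r = some true →
      (∀ k, (v k).isSome) ∧
      ∀ x : Fin (2 * N) → Fin 10, (∀ k d, v k = some d → x k = d) →
        additionResult N x = r) := by
  have hsum {b : Bool} (h : addOracle N v r = some b) (x : Fin (2 * N) → Fin 10)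
      (hx : ∀ k d, v k = some d → x k = d) : b = true ↔ additionResult N x = r := by
    have := eq_true_iff_of_addOracleAux_eq_some
      (liftTotal_eq_of_liftValuation_eq_some hx) le_rfl h
    rwa [zero_add, Nat.sub_self, pow_zero, Nat.div_one, ← additionResult_eq_columnPrefix] at this
  refine ⟨fun h x hx => by simpa using hsum h x hx,
    fun h => ⟨fun k => ?_, fun x hx => (hsum h x hx).mp rfl⟩⟩
  have htotal := isSome_of_addOracleAux_eq_some_true h
  rw [← isSome_liftValuation]
  rcases lt_or_ge (k : ℕ) N with hk | hk
  · exact (htotal k hk).1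
  · have hright := (htotal (k - N) (by omega)).2
    rwa [Nat.add_sub_cancel' hk] at hright

/-- validity of the AdditionOracle: if it returns 0 then every total
extension of `v` has sum different from `r`; if it returns 1 then `v` is total and
every total extension (i.e. `v` itself) has sum equal to `r`. -/
theorem stmt13 (N : ℕ) (v : Fin (2 * N) → Option (Fin 10)) (r : ℕ)
    (hr : r < 2 * 10 ^ N) :
    (addOracle N v r = some false →
      ∀ x : Fin (2 * N) → Fin 10, (∀ k d, v k = some d → x k = d) →
        additionResult N x ≠ r) ∧
    (addOracle N v r = some true →
      (∀ k, (v k).isSome) ∧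
      ∀ x : Fin (2 * N) → Fin 10, (∀ k d, v k = some d → x k = d) →
        additionResult N x = r) :=
  stmt13_general N v r
end

section
/- In the ApproxDPNL loop, the invariant low ≤ P(F = o) ≤ up is preserved: partitioning the total valuations into those covered by finished branches where the oracle answered 1 (contributing their probability mass to low), those where it answered 0 (subtracted from up), and those still in the queue, one has low + Σ_{v ∈ queue} P(w(v)) ≥ up and low ≤ P(F = o) ≤ up at every iteration. Consequently, if the algorithm stops when up − low ≤ ε, the returned value r = √(low·up) satisfies P(F = o) − ε ≤ r ≤ P(F = o) + ε. -/
open MeasureTheory Finset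

/-- `w(v)`: the event that `(X₁,…,X_m)` is a total extension of the valuation `v`. -/
def extEvent {Ω : Type*} {m : ℕ} {V : Fin m → Type*}
    (X : ∀ k, Ω → V k) (v : ∀ k, Option (V k)) : Set Ω :=
  {ω | ∀ k y, v k = some y → X k ω = y}

/-- Real-valued probability of an event. -/
noncomputable def pr {Ω : Type*} [MeasurableSpace Ω] (P : Measure Ω) (A : Set Ω) : ℝ :=
  (P A).toReal

/-- The ApproxDPNL loop invariant for a state `(low, up, queue)`: the queue events are
pairwise disjoint, `low` is the mass of `{F = o}` already decided (outside the queue),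
and `up` is `1` minus the mass of `{F ≠ o}` already decided. -/
def ApproxInv {Ω : Type*} [MeasurableSpace Ω] (P : Measure Ω)
    {m : ℕ} {V : Fin m → Type*} [∀ k, Fintype (V k)] [∀ k, DecidableEq (V k)]
    {O : Type*} (X : ∀ k, Ω → V k) (S : (∀ k, V k) → O) (o : O)
    (low up : ℝ) (Q : Finset (∀ k, Option (V k))) : Prop :=
  (∀ v ∈ Q, ∀ v' ∈ Q, v ≠ v' → extEvent X v ∩ extEvent X v' = ∅) ∧
  low = pr P ({ω | S (fun k => X k ω) = o} \ ⋃ v ∈ Q, extEvent X v) ∧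
  up = 1 - pr P ({ω | S (fun k => X k ω) ≠ o} \ ⋃ v ∈ Q, extEvent X v)

section Aux

variable {Ω : Type*} [MeasurableSpace Ω] (P : Measure Ω) [IsProbabilityMeasure P]
  {m : ℕ} {V : Fin m → Type*} [∀ k, Fintype (V k)] [∀ k, DecidableEq (V k)]

lemma measExt (X : ∀ k, Ω → V k)
    (hmeas : ∀ k (x : V k), MeasurableSet {ω | X k ω = x}) (v : ∀ k, Option (V k)) :
    MeasurableSet (extEvent X v) := by
  have h : extEvent X v = ⋂ k, ⋂ y, ⋂ (_ : v k = some y), {ω | X k ω = y} := by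
    ext ω; simp [extEvent]
  rw [h]
  exact MeasurableSet.iInter fun k => MeasurableSet.iInter fun y =>
    MeasurableSet.iInter fun _ => hmeas k y

lemma measE {O : Type*} (X : ∀ k, Ω → V k)
    (hmeas : ∀ k (x : V k), MeasurableSet {ω | X k ω = x}) (S : (∀ k, V k) → O) (o : O) :
    MeasurableSet {ω | S (fun k => X k ω) = o} := by
  have h : {ω | S (fun k => X k ω) = o}
      = ⋃ (x : ∀ k, V k), ⋃ (_ : S x = o), ⋂ k, {ω | X k ω = x k} := by
    ext ω
    simp only [Set.mem_setOf_eq, Set.mem_iUnion, Set.mem_iInter]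
    constructor
    · intro h; exact ⟨fun k => X k ω, h, fun k => rfl⟩
    · rintro ⟨x, hx, hxk⟩
      have : (fun k => X k ω) = x := funext hxk
      rw [this]; exact hx
  rw [h]
  exact MeasurableSet.iUnion fun x => MeasurableSet.iUnion fun _ =>
    MeasurableSet.iInter fun k => hmeas k (x k)

lemma pr_nonneg (A : Set Ω) : 0 ≤ pr P A := ENNReal.toReal_nonneg

lemma pr_mono {A B : Set Ω} (h : A ⊆ B) : pr P A ≤ pr P B :=
  ENNReal.toReal_mono (measure_ne_top P B) (measure_mono h)

lemma pr_union {A B : Set Ω} (h : Disjoint A B) (hB : MeasurableSet B) :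
    pr P (A ∪ B) = pr P A + pr P B := by
  unfold pr
  rw [measure_union h hB, ENNReal.toReal_add (measure_ne_top P A) (measure_ne_top P B)]

lemma pr_compl {A : Set Ω} (hA : MeasurableSet A) : pr P Aᶜ = 1 - pr P A := by
  unfold pr
  rw [prob_compl_eq_one_sub hA, ENNReal.toReal_sub_of_le prob_le_one (by simp)]
  simp

end Aux

/-- the ApproxDPNL invariant `low ≤ P(F = o) ≤ up` (together with
`up ≤ low + Σ_{v ∈ queue} P(w(v))`) holds initially and is preserved by every loop
step (oracle answers 1, 0, or ⊥ with branching); consequently, if the loop stops when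
`up − low ≤ ε`, the returned value `√(low·up)` is within `ε` of `P(F = o)`. -/
theorem stmt19 {Ω : Type*} [MeasurableSpace Ω] (P : Measure Ω) [IsProbabilityMeasure P]
    {m : ℕ} {V : Fin m → Type*} [∀ k, Fintype (V k)] [∀ k, DecidableEq (V k)]
    {O : Type*} [DecidableEq O]
    (X : ∀ k, Ω → V k)
    (hmeas : ∀ k (x : V k), MeasurableSet {ω | X k ω = x})
    (hind : ∀ x : ∀ k, V k, P (⋂ k, {ω | X k ω = x k}) = ∏ k, P {ω | X k ω = x k})
    (S : (∀ k, V k) → O) (o : O)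
    (Or : (∀ k, Option (V k)) → O → Option Bool)
    (hOr_total : ∀ (v : ∀ k, Option (V k)) (o' : O) (x : ∀ k, V k),
        (∀ k, v k = some (x k)) → Or v o' = some (decide (S x = o')))
    (hOr1 : ∀ (v : ∀ k, Option (V k)) (o' : O), Or v o' = some true →
        ∀ x : ∀ k, V k, (∀ k y, v k = some y → x k = y) → S x = o')
    (hOr0 : ∀ (v : ∀ k, Option (V k)) (o' : O), Or v o' = some false →
        ∀ x : ∀ k, V k, (∀ k y, v k = some y → x k = y) → S x ≠ o') :
    -- the invariant yields the claimed bounds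
    (∀ (low up : ℝ) (Q : Finset (∀ k, Option (V k))), ApproxInv P X S o low up Q →
        low ≤ pr P {ω | S (fun k => X k ω) = o} ∧
        pr P {ω | S (fun k => X k ω) = o} ≤ up ∧
        up ≤ low + ∑ v ∈ Q, pr P (extEvent X v)) ∧
    -- the invariant holds initially (low = 0, up = 1, queue = {[⊥,…,⊥]})
    ApproxInv P X S o 0 1 {fun _ => none} ∧
    -- preservation: finished branch where the oracle answers 1
    (∀ (low up : ℝ) (Q : Finset (∀ k, Option (V k))) (v : ∀ k, Option (V k)),
        ApproxInv P X S o low up Q → v ∈ Q → Or v o = some true →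
        ApproxInv P X S o (low + pr P (extEvent X v)) up (Q.erase v)) ∧
    -- preservation: finished branch where the oracle answers 0
    (∀ (low up : ℝ) (Q : Finset (∀ k, Option (V k))) (v : ∀ k, Option (V k)),
        ApproxInv P X S o low up Q → v ∈ Q → Or v o = some false →
        ApproxInv P X S o low (up - pr P (extEvent X v)) (Q.erase v)) ∧
    -- preservation: branching on an unassigned index k
    (∀ (low up : ℝ) (Q : Finset (∀ k, Option (V k))) (v : ∀ k, Option (V k)) (k : Fin m),
        ApproxInv P X S o low up Q → v ∈ Q → Or v o = none → v k = none →
        ApproxInv P X S o low up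
          ((Q.erase v) ∪ Finset.univ.image (fun y : V k => Function.update v k (some y)))) ∧
    -- stopping when up − low ≤ ε: the geometric mean is within ε of P(F = o)
    (∀ (low up ε : ℝ) (Q : Finset (∀ k, Option (V k))), ApproxInv P X S o low up Q →
        up - low ≤ ε →
        pr P {ω | S (fun k => X k ω) = o} - ε ≤ Real.sqrt (low * up) ∧
        Real.sqrt (low * up) ≤ pr P {ω | S (fun k => X k ω) = o} + ε) := by
  have hEm : MeasurableSet {ω | S (fun k => X k ω) = o} := measE X hmeas S o
  have hNE : {ω | S (fun k => X k ω) ≠ o} = {ω | S (fun k => X k ω) = o}ᶜ := rfl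
  -- Part 1: the bounds
  have hbounds : ∀ (low up : ℝ) (Q : Finset (∀ k, Option (V k))), ApproxInv P X S o low up Q →
      low ≤ pr P {ω | S (fun k => X k ω) = o} ∧
      pr P {ω | S (fun k => X k ω) = o} ≤ up ∧
      up ≤ low + ∑ v ∈ Q, pr P (extEvent X v) := by
    rintro low up Q ⟨hdisj, hlow, hup⟩
    set E := {ω | S (fun k => X k ω) = o} with hE
    set U := ⋃ v ∈ Q, extEvent X v with hU
    have hUm : MeasurableSet U :=
      MeasurableSet.iUnion fun v => MeasurableSet.iUnion fun _ => measExt X hmeas v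
    rw [hNE] at hup
    have h1 : low ≤ pr P E := hlow ▸ pr_mono P Set.diff_subset
    have hEc : pr P Eᶜ = 1 - pr P E := pr_compl P hEm
    have h2a : pr P (Eᶜ \ U) ≤ pr P Eᶜ := pr_mono P Set.diff_subset
    have h2 : pr P E ≤ up := by rw [hup]; linarith
    have hkey : pr P (E \ U) + pr P (Eᶜ \ U) = pr P Uᶜ := by
      rw [← pr_union P (Set.disjoint_left.mpr fun ω hω hω' => hω'.1 hω.1)
        (hEm.compl.diff hUm)]
      congr 1
      ext ω
      simp only [Set.mem_union, Set.mem_diff, Set.mem_compl_iff]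
      tauto
    have hUc : pr P Uᶜ = 1 - pr P U := pr_compl P hUm
    have hsum : pr P U ≤ ∑ v ∈ Q, pr P (extEvent X v) := by
      have hle : P U ≤ ∑ v ∈ Q, P (extEvent X v) := measure_biUnion_finset_le Q _
      calc pr P U ≤ (∑ v ∈ Q, P (extEvent X v)).toReal :=
            ENNReal.toReal_mono (ENNReal.sum_ne_top.mpr fun v _ => measure_ne_top P _) hle
        _ = ∑ v ∈ Q, pr P (extEvent X v) :=
            ENNReal.toReal_sum fun v _ => measure_ne_top P _
    exact ⟨h1, h2, by rw [hlow, hup]; linarith⟩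
  refine ⟨hbounds, ?_, ?_, ?_, ?_, ?_⟩
  -- Part 2: initial state
  · have huniv : (⋃ v ∈ ({fun _ => none} : Finset (∀ k, Option (V k))), extEvent X v)
        = Set.univ := by
      simp only [Finset.mem_singleton, Set.iUnion_iUnion_eq_left]
      ext ω; simp [extEvent]
    refine ⟨?_, ?_, ?_⟩
    · intro v hv v' hv' hne
      simp only [Finset.mem_singleton] at hv hv'
      exact absurd (hv.trans hv'.symm) hne
    · rw [huniv]; simp [pr]
    · rw [huniv]; simp [pr]
  -- Part 3: oracle answers 1
  · rintro low up Q v ⟨hdisj, hlow, hup⟩ hv hor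
    have hsub : extEvent X v ⊆ {ω | S (fun k => X k ω) = o} :=
      fun ω hω => hOr1 v o hor (fun k => X k ω) hω
    set U' := ⋃ w ∈ Q.erase v, extEvent X w with hU'
    have hUsplit : (⋃ w ∈ Q, extEvent X w) = U' ∪ extEvent X v := by
      conv_lhs => rw [← Finset.insert_erase hv]
      rw [Finset.set_biUnion_insert, Set.union_comm]
    have hdisjU' : ∀ ω, ω ∈ extEvent X v → ω ∉ U' := by
      intro ω hω hω'
      simp only [hU', Set.mem_iUnion] at hω'
      obtain ⟨w, hw, hww⟩ := hω'
      have h0 := hdisj v hv w (Finset.mem_of_mem_erase hw)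
        (Ne.symm (Finset.ne_of_mem_erase hw))
      have : ω ∈ (∅ : Set Ω) := h0 ▸ Set.mem_inter hω hww
      exact this
    refine ⟨?_, ?_, ?_⟩
    · intro a ha b hb hne
      exact hdisj a (Finset.mem_of_mem_erase ha) b (Finset.mem_of_mem_erase hb) hne
    · have hset : {ω | S (fun k => X k ω) = o} \ U'
          = ({ω | S (fun k => X k ω) = o} \ ⋃ w ∈ Q, extEvent X w) ∪ extEvent X v := by
        rw [hUsplit]
        ext ω
        simp only [Set.mem_diff, Set.mem_union]
        constructor
        · rintro ⟨hEω, hUω⟩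
          by_cases hvω : ω ∈ extEvent X v
          · exact _root_.Or.inr hvω
          · exact _root_.Or.inl ⟨hEω, fun h => h.elim hUω hvω⟩
        · rintro (⟨hEω, hUω⟩ | hvω)
          · exact ⟨hEω, fun h => hUω (_root_.Or.inl h)⟩
          · exact ⟨hsub hvω, hdisjU' ω hvω⟩
      rw [hset, pr_union P ?_ (measExt X hmeas v), hlow]
      rw [Set.disjoint_left]
      intro ω hω hvω
      exact hω.2 (hUsplit ▸ Set.mem_union_right _ hvω)
    · have hset : {ω | S (fun k => X k ω) ≠ o} \ U'
          = {ω | S (fun k => X k ω) ≠ o} \ ⋃ w ∈ Q, extEvent X w := by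
        rw [hUsplit]
        ext ω
        simp only [Set.mem_diff, Set.mem_union, Set.mem_setOf_eq]
        constructor
        · rintro ⟨hNω, hUω⟩
          exact ⟨hNω, fun h => h.elim hUω (fun hvω => hNω (hsub hvω))⟩
        · rintro ⟨hNω, hUω⟩
          exact ⟨hNω, fun h => hUω (_root_.Or.inl h)⟩
      rw [hset]; exact hup
  -- Part 4: oracle answers 0
  · rintro low up Q v ⟨hdisj, hlow, hup⟩ hv hor
    have hsub : extEvent X v ⊆ {ω | S (fun k => X k ω) ≠ o} :=
      fun ω hω => hOr0 v o hor (fun k => X k ω) hω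
    set U' := ⋃ w ∈ Q.erase v, extEvent X w with hU'
    have hUsplit : (⋃ w ∈ Q, extEvent X w) = U' ∪ extEvent X v := by
      conv_lhs => rw [← Finset.insert_erase hv]
      rw [Finset.set_biUnion_insert, Set.union_comm]
    have hdisjU' : ∀ ω, ω ∈ extEvent X v → ω ∉ U' := by
      intro ω hω hω'
      simp only [hU', Set.mem_iUnion] at hω'
      obtain ⟨w, hw, hww⟩ := hω'
      have h0 := hdisj v hv w (Finset.mem_of_mem_erase hw)
        (Ne.symm (Finset.ne_of_mem_erase hw))
      have : ω ∈ (∅ : Set Ω) := h0 ▸ Set.mem_inter hω hww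
      exact this
    refine ⟨?_, ?_, ?_⟩
    · intro a ha b hb hne
      exact hdisj a (Finset.mem_of_mem_erase ha) b (Finset.mem_of_mem_erase hb) hne
    · have hset : {ω | S (fun k => X k ω) = o} \ U'
          = {ω | S (fun k => X k ω) = o} \ ⋃ w ∈ Q, extEvent X w := by
        rw [hUsplit]
        ext ω
        simp only [Set.mem_diff, Set.mem_union, Set.mem_setOf_eq]
        constructor
        · rintro ⟨hEω, hUω⟩
          exact ⟨hEω, fun h => h.elim hUω (fun hvω => hsub hvω hEω)⟩
        · rintro ⟨hEω, hUω⟩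
          exact ⟨hEω, fun h => hUω (_root_.Or.inl h)⟩
      rw [hset]; exact hlow
    · have hset : {ω | S (fun k => X k ω) ≠ o} \ U'
          = ({ω | S (fun k => X k ω) ≠ o} \ ⋃ w ∈ Q, extEvent X w) ∪ extEvent X v := by
        rw [hUsplit]
        ext ω
        simp only [Set.mem_diff, Set.mem_union]
        constructor
        · rintro ⟨hNω, hUω⟩
          by_cases hvω : ω ∈ extEvent X v
          · exact _root_.Or.inr hvω
          · exact _root_.Or.inl ⟨hNω, fun h => h.elim hUω hvω⟩
        · rintro (⟨hNω, hUω⟩ | hvω)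
          · exact ⟨hNω, fun h => hUω (_root_.Or.inl h)⟩
          · exact ⟨hsub hvω, hdisjU' ω hvω⟩
      rw [hset, pr_union P ?_ (measExt X hmeas v), hup]
      · ring
      rw [Set.disjoint_left]
      intro ω hω hvω
      exact hω.2 (hUsplit ▸ Set.mem_union_right _ hvω)
  -- Part 5: branching
  · rintro low up Q v k ⟨hdisj, hlow, hup⟩ hv hor hvk
    have hsub : ∀ y : V k, extEvent X (Function.update v k (some y)) ⊆ extEvent X v := by
      intro y ω hω k' y' h
      rcases eq_or_ne k' k with rfl | hne
      · rw [hvk] at h; cases h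
      · exact hω k' y' (by rw [Function.update_of_ne hne]; exact h)
    have hcover : extEvent X v = ⋃ y : V k, extEvent X (Function.update v k (some y)) := by
      ext ω
      simp only [Set.mem_iUnion]
      constructor
      · intro hω
        refine ⟨X k ω, ?_⟩
        intro k' y' h
        rcases eq_or_ne k' k with rfl | hne
        · rw [Function.update_self] at h
          exact Option.some.inj h
        · exact hω k' y' (by rwa [Function.update_of_ne hne] at h)
      · rintro ⟨y, hy⟩
        exact hsub y hy
    have hUeq : (⋃ w ∈ (Q.erase v) ∪ Finset.univ.image
          (fun y : V k => Function.update v k (some y)), extEvent X w)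
        = ⋃ w ∈ Q, extEvent X w := by
      ext ω
      simp only [Set.mem_iUnion, Finset.mem_union, Finset.mem_image, Finset.mem_univ,
        true_and, Finset.mem_erase]
      constructor
      · rintro ⟨w, hw | ⟨y, rfl⟩, hωw⟩
        · exact ⟨w, hw.2, hωw⟩
        · exact ⟨v, hv, hsub y hωw⟩
      · rintro ⟨w, hw, hωw⟩
        by_cases hwv : w = v
        · subst hwv
          rw [hcover] at hωw
          simp only [Set.mem_iUnion] at hωw
          obtain ⟨y, hy⟩ := hωw
          exact ⟨Function.update w k (some y), _root_.Or.inr ⟨y, rfl⟩, hy⟩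
        · exact ⟨w, _root_.Or.inl ⟨hwv, hw⟩, hωw⟩
    refine ⟨?_, by rw [hUeq]; exact hlow, by rw [hUeq]; exact hup⟩
    intro a ha b hb hne
    simp only [Finset.mem_union, Finset.mem_erase, Finset.mem_image, Finset.mem_univ,
      true_and] at ha hb
    have key : ∀ (c : ∀ k', Option (V k')) (y : V k), c ≠ v → c ∈ Q →
        extEvent X c ∩ extEvent X (Function.update v k (some y)) = ∅ := by
      intro c y hcv hcQ
      have h0 := hdisj c hcQ v hv hcv
      exact Set.eq_empty_of_subset_empty
        (h0 ▸ Set.inter_subset_inter_right _ (hsub y))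
    rcases ha with ⟨hav, haQ⟩ | ⟨ya, rfl⟩
    · rcases hb with ⟨hbv, hbQ⟩ | ⟨yb, rfl⟩
      · exact hdisj a haQ b hbQ hne
      · exact key a yb hav haQ
    · rcases hb with ⟨hbv, hbQ⟩ | ⟨yb, rfl⟩
      · rw [Set.inter_comm]
        exact key b ya hbv hbQ
      · have hyy : ya ≠ yb := fun h => hne (by rw [h])
        ext ω
        simp only [Set.mem_inter_iff, Set.mem_empty_iff_false, iff_false, not_and]
        intro h1 h2
        have e1 : X k ω = ya := h1 k ya (Function.update_self k (some ya) v)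
        have e2 : X k ω = yb := h2 k yb (Function.update_self k (some yb) v)
        exact absurd (e1 ▸ e2) hyy
  -- Part 6: stopping
  · intro low up ε Q hinv hstop
    obtain ⟨h1, h2, _⟩ := hbounds low up Q hinv
    have hl0 : 0 ≤ low := by rw [hinv.2.1]; exact ENNReal.toReal_nonneg
    have hlu : low ≤ up := h1.trans h2
    have hu0 : 0 ≤ up := hl0.trans hlu
    have hs1 : low ≤ Real.sqrt (low * up) := by
      calc low = Real.sqrt (low * low) := (Real.sqrt_mul_self hl0).symm
        _ ≤ Real.sqrt (low * up) := Real.sqrt_le_sqrt (mul_le_mul_of_nonneg_left hlu hl0)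
    have hs2 : Real.sqrt (low * up) ≤ up := by
      calc Real.sqrt (low * up) ≤ Real.sqrt (up * up) :=
            Real.sqrt_le_sqrt (mul_le_mul_of_nonneg_right hlu hu0)
        _ = up := Real.sqrt_mul_self hu0
    constructor <;> linarith
end
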